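/- Let r ≥ 2 be an integer, let A be a set of k ≥ 6 positive integers, and let H be a set of t ≥ 2 positive integers with (k−1)r − 1 < min(H) < max(H) < kr. Let m_1 = ⌊min(H)/r⌋. If |H^{(r)}A| = m_1·r·(k − m_1) + (min(H) − m_1·r)·(k − 2m_1 − 1) + t, then H is an arithmetic progression with some common difference d with 1 ≤ d ≤ r − 1, and A is an arithmetic progression with common difference d·min(A). -/

import Mathlib

/-!
Reflecting every coefficient vector `λ ↦ r - λ` maps `h^(r)A` onto `(kr - h)^(r)A`, and for
`j = kr - h ≤ r` the bound `r` on the coefficients is void, so `H^(r)A` is the image of `⋃_{j ∈ J} jA` under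
`x ↦ r ∑ A - x`, where `J = kr - H ⊆ [1, r]`. For `a₀ = min A` and `jₜ = max J` this union contains
the disjoint sets `jₜA` and `{j a₀ : j ∈ J, j < jₜ}`; by Cauchy–Davenport it has at least
`(k - 1) jₜ + t` elements, which is the hypothesised size. Equality forces `|2A| = 2k - 1`, so `A`
is an arithmetic progression of some difference `δ` (Freiman), and leaves no room for other
elements. Then for `j ∈ J`, `j < jₜ`, the element `j a₀ + δ` of `jA` must be some `l a₀` with
`l ∈ J`: this gives `δ = d a₀` and `j + d ∈ J`, so `J`, and with it `H`, is a progression of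
difference `d`.
-/

/-- The generalized `h`-fold sumset `h^(r)A`: all sums of `h` elements of `A`
where every summand appears at most `r` times. -/
def genSumset (r h : ℕ) (A : Finset ℤ) : Set ℤ :=
  {x | ∃ lam : ℤ → ℕ, (∀ a, lam a ≤ r) ∧ (∀ a ∉ A, lam a = 0) ∧
    (∑ a ∈ A, lam a) = h ∧ (∑ a ∈ A, (lam a : ℤ) * a) = x}

/-- The generalized `H`-fold sumset `H^(r)A = ⋃_{h ∈ H} h^(r)A`. -/
def HSumset (r : ℕ) (H : Finset ℕ) (A : Finset ℤ) : Set ℤ :=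
  ⋃ h ∈ H, genSumset r h A

/-- `S` is an arithmetic progression of natural numbers with common difference `d`. -/
def IsAPNat (S : Finset ℕ) (d : ℕ) : Prop :=
  ∃ s : ℕ, S = (Finset.range S.card).image (fun i => s + i * d)

/-- `S` is an arithmetic progression of integers with common difference `d`. -/
def IsAPInt (S : Finset ℤ) (d : ℤ) : Prop :=
  ∃ s : ℤ, S = (Finset.range S.card).image (fun i : ℕ => s + (i : ℤ) * d)

open Finset Pointwise

section AddCommMonoid

variable {α : Type*} [AddCommMonoid α] [DecidableEq α] {A : Finset α}

theorem Finset.mem_nsmul_iff_exists_sum {n : ℕ} {x : α} :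
    x ∈ n • A ↔ ∃ μ : α → ℕ, ∑ a ∈ A, μ a = n ∧ ∑ a ∈ A, μ a • a = x := by
  constructor
  · induction n generalizing x with
    | zero => exact fun hx => ⟨0, by simp, by simpa [eq_comm] using hx⟩
    | succ n ih =>
      rw [succ_nsmul, mem_add]
      rintro ⟨y, hy, b, hb, rfl⟩
      obtain ⟨μ, rfl, rfl⟩ := ih hy
      refine ⟨μ + Pi.single b 1, ?_, ?_⟩
      · simp [sum_add_distrib, hb]
      · simp [add_smul, sum_add_distrib, Pi.single_apply, hb]
  · rintro ⟨μ, rfl, rfl⟩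
    rw [← mem_coe, coe_nsmul, ← sum_nsmul_assoc]
    exact Set.finsetSum_mem_finsetSum _ _ _ fun a ha => Set.nsmul_mem_nsmul ha

theorem Finset.exists_nsmul_add_nsmul_of_mem_nsmul {a δ x : α} {n : ℕ}
    (hA : ∀ y ∈ A, ∃ i : ℕ, y = a + i • δ) (hx : x ∈ n • A) : ∃ u : ℕ, x = n • a + u • δ := by
  induction n generalizing x with
  | zero => exact ⟨0, by simpa using hx⟩
  | succ n ih =>
    rw [succ_nsmul, mem_add] at hx
    obtain ⟨y, hy, z, hz, rfl⟩ := hx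
    obtain ⟨u, rfl⟩ := ih hy
    obtain ⟨i, rfl⟩ := hA z hz
    exact ⟨u + i, by rw [succ_nsmul, add_nsmul]; abel⟩

theorem Finset.nsmul_le_of_mem_nsmul [PartialOrder α] [IsOrderedAddMonoid α] {b x : α} {n : ℕ}
    (hb : ∀ a ∈ A, b ≤ a) (hx : x ∈ n • A) : n • b ≤ x := by
  induction n generalizing x with
  | zero => simp_all
  | succ n ih =>
    rw [succ_nsmul, mem_add] at hx
    obtain ⟨y, hy, a, ha, rfl⟩ := hx
    rw [succ_nsmul]
    exact add_le_add (ih hy) (hb a ha)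

end AddCommMonoid

section OrderedMonoid

variable {α : Type*} [AddCommMonoid α] [LinearOrder α] [IsOrderedCancelAddMonoid α]
  [DecidableEq α]

theorem Finset.eq_image_range_of_add_mem {S : Finset α} {m M δ : α} (hm : IsLeast ↑S m)
    (hδ : 0 < δ) (hstep : ∀ x ∈ S, x ≠ M → x + δ ∈ S) :
    S = (range #S).image (fun i => m + i • δ) := by
  have hmono (x : α) : StrictMono fun n : ℕ => x + n • δ :=
    fun i j hij => add_lt_add_right (nsmul_lt_nsmul_left hδ hij) x
  have climb : ∀ x ∈ S, ∀ n : ℕ, (∀ i < n, x + i • δ ≠ M) → x + n • δ ∈ S := by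
    intro x hx n
    induction n with
    | zero => simpa using hx
    | succ n ih =>
      intro hne
      rw [succ_nsmul, ← add_assoc]
      exact hstep _ (ih fun i hi => hne i (by omega)) (hne n (by omega))
  have reach : ∀ x ∈ S, ∃ n : ℕ, x + n • δ = M := by
    intro x hx
    by_contra! hne
    exact Set.infinite_of_injective_forall_mem (hmono x).injective
      (fun n => mem_coe.2 (climb x hx n fun i _ => hne i)) S.finite_toSet
  classical
  have hn₀ := Nat.find_spec (reach m hm.1)
  have hlt := fun i => Nat.find_min (reach m hm.1) (m := i)
  set n₀ := Nat.find (reach m hm.1)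
  have hS : S = (range (n₀ + 1)).image (fun i => m + i • δ) := by
    ext x
    simp only [mem_image, mem_range, Nat.lt_succ_iff]
    constructor
    · intro hx
      obtain ⟨n, hn⟩ := reach x hx
      have hle : n ≤ n₀ := by
        rw [← nsmul_le_nsmul_iff_left hδ, ← add_le_add_iff_left m, hn₀, ← hn]
        exact add_le_add_left (hm.2 hx) _
      refine ⟨n₀ - n, Nat.sub_le _ _, add_right_cancel (b := n • δ) ?_⟩
      rw [add_assoc, ← add_nsmul, Nat.sub_add_cancel hle, hn₀, hn]
    · rintro ⟨i, hi, rfl⟩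
      exact climb m hm.1 i fun j hj => hlt j (by omega)
  have hcard : #S = n₀ + 1 := by
    rw [hS, card_image_of_injective _ (hmono m).injective, card_range]
  rwa [hcard]

variable {A : Finset α}

theorem Finset.card_nsmul_add_mul_le (hA : A.Nonempty) (m n : ℕ) :
    #(m • A) + n * (#A - 1) ≤ #((m + n) • A) := by
  induction n with
  | zero => simp
  | succ n ih =>
    have hcd : #((m + n) • A) + #A - 1 ≤ #((m + n) • A + A) :=
      by convert cauchy_davenport_add_of_linearOrder_isCancelAdd hA.nsmul hA
    have : 0 < #((m + n) • A) := hA.nsmul.card_pos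
    rw [← add_assoc, succ_nsmul]
    have := hA.card_pos
    rw [add_one_mul]
    omega

end OrderedMonoid

section OrderedGroup

variable {α : Type*} [AddCommGroup α] [LinearOrder α] [IsOrderedAddMonoid α] [DecidableEq α]
  {A : Finset α} {a b : α}

theorem Finset.add_self_eq_union_of_card_le (ha : IsLeast ↑A a) (hb : IsGreatest ↑A b)
    (h : #(A + A) ≤ 2 * #A - 1) : A + A = A.image (a + ·) ∪ A.image (b + ·) := by
  refine (eq_of_subset_of_card_le ?_ ?_).symm
  · refine union_subset ?_ ?_ <;> rintro _ hx <;> obtain ⟨c, hc, rfl⟩ := mem_image.1 hx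
    exacts [add_mem_add ha.1 hc, add_mem_add hb.1 hc]
  · have hinter : #(A.image (a + ·) ∩ A.image (b + ·)) ≤ 1 := by
      have key : ∀ z ∈ A.image (a + ·) ∩ A.image (b + ·), z = a + b := by
        simp only [mem_inter, mem_image]
        rintro _ ⟨⟨c, hc, rfl⟩, c', hc', hcc'⟩
        refine le_antisymm (add_le_add_right (hb.2 hc) a) ?_
        rw [← hcc', add_comm a b]
        exact add_le_add_right (ha.2 hc') b
      exact card_le_one.2 fun x hx y hy => (key x hx).trans (key y hy).symm
    have := card_union_add_card_inter (A.image (a + ·)) (A.image (b + ·))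
    rw [card_image_of_injective _ (add_right_injective a),
      card_image_of_injective _ (add_right_injective b)] at this
    omega

theorem Finset.exists_add_mem_of_card_add_self_le (hA : 1 < #A) (ha : IsLeast ↑A a)
    (hb : IsGreatest ↑A b) (h : #(A + A) ≤ 2 * #A - 1) : ∃ δ > 0, ∀ x ∈ A, x ≠ b → x + δ ∈ A := by
  have hne : (A.erase a).Nonempty := by
    rw [← card_pos, card_erase_of_mem ha.1]
    omega
  set a₁ := (A.erase a).min' hne
  have ha₁ : a₁ ∈ A.erase a := min'_mem _ _
  have ha₁A : a₁ ∈ A := mem_of_mem_erase ha₁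
  refine ⟨a₁ - a, sub_pos.2 (lt_of_le_of_ne (ha.2 ha₁A) (ne_of_mem_erase ha₁).symm),
    fun x hx hxb => ?_⟩
  have hsum : x + a₁ ∈ A + A := add_mem_add hx ha₁A
  rw [add_self_eq_union_of_card_le ha hb h, mem_union, mem_image, mem_image] at hsum
  rcases hsum with ⟨c, hc, hac⟩ | ⟨c, hc, hbc⟩
  · convert hc using 1
    rw [← add_sub_assoc, ← hac, add_sub_cancel_left]
  · have hca₁ : c < a₁ := lt_of_add_lt_add_left (a := b) <| by
      rw [hbc]
      exact add_lt_add_left (lt_of_le_of_ne (hb.2 hx) hxb) a₁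
    have hca : c = a := by
      by_contra hca
      exact (min'_le _ c (mem_erase.2 ⟨hca, hc⟩)).not_gt hca₁
    convert mem_coe.1 hb.1 using 1
    rw [← add_sub_assoc, ← hbc, hca, add_sub_cancel_right]

theorem Finset.exists_eq_image_range_of_card_add_self_le (hA : 1 < #A) (ha : IsLeast ↑A a)
    (h : #(A + A) ≤ 2 * #A - 1) : ∃ δ > 0, A = (range #A).image (fun i => a + i • δ) := by
  obtain ⟨δ, hδ, hstep⟩ :=
    exists_add_mem_of_card_add_self_le hA ha (A.isGreatest_max' (card_pos.1 (by omega))) h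
  exact ⟨δ, hδ, eq_image_range_of_add_mem ha hδ hstep⟩

end OrderedGroup

theorem Finset.image_tsub_image_tsub {S : Finset ℕ} {c : ℕ} (hc : ∀ x ∈ S, x ≤ c) :
    (S.image (c - ·)).image (c - ·) = S := by
  rw [image_image]
  exact (image_congr fun x hx => Nat.sub_sub_self (hc x hx)).trans image_id'

theorem Finset.card_image_tsub {S : Finset ℕ} {c : ℕ} (hc : ∀ x ∈ S, x ≤ c) :
    #(S.image (c - ·)) = #S :=
  card_image_of_injOn fun x hx y hy hxy => by
    have := hc x hx
    have := hc y hy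
    omega

theorem IsAPNat.le_sub {S : Finset ℕ} {d a b : ℕ} (hS : IsAPNat S d) (hS₁ : 1 < #S)
    (hab : ∀ x ∈ S, a ≤ x ∧ x ≤ b) : d ≤ b - a := by
  obtain ⟨s, hs⟩ := hS
  have h₀ := hab s (by rw [hs]; exact mem_image.2 ⟨0, mem_range.2 (by omega), by simp⟩)
  have h₁ := hab (s + d) (by rw [hs]; exact mem_image.2 ⟨1, mem_range.2 hS₁, by simp⟩)
  omega

theorem IsAPNat.image_tsub {S : Finset ℕ} {d c : ℕ} (hS : IsAPNat S d) (hc : ∀ x ∈ S, x ≤ c) :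
    IsAPNat (S.image (c - ·)) d := by
  obtain ⟨s, hs⟩ := hS
  set n := #S
  have hcard : #(S.image (c - ·)) = n := card_image_tsub hc
  rcases Nat.eq_zero_or_pos n with hn | hn
  · exact ⟨0, by simp [card_eq_zero.1 hn]⟩
  have hlast : s + (n - 1) * d ≤ c :=
    hc _ (by rw [hs]; exact mem_image.2 ⟨n - 1, by simp; omega, rfl⟩)
  refine ⟨c - (s + (n - 1) * d), ?_⟩
  rw [hcard, hs, image_image]
  ext x
  simp only [mem_image, mem_range, Function.comp]
  constructor <;> rintro ⟨i, hi, rfl⟩ <;> refine ⟨n - 1 - i, by omega, ?_⟩ <;>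
    have : (n - 1 - i) * d + i * d = (n - 1) * d := by rw [← add_mul, Nat.sub_add_cancel (by omega)]
  all_goals omega

section GenSumset

variable {A : Finset ℤ} {r n h : ℕ} {x : ℤ}

theorem genSumset_eq_nsmul (hn : n ≤ r) : genSumset r n A = ↑(n • A) := by
  ext x
  simp only [genSumset, Set.mem_ofPred_eq, mem_coe, mem_nsmul_iff_exists_sum, nsmul_eq_mul]
  constructor
  · rintro ⟨lam, -, -, hsum, hx⟩
    exact ⟨lam, hsum, hx⟩
  · rintro ⟨μ, rfl, rfl⟩
    refine ⟨fun a => if a ∈ A then μ a else 0, fun a => ?_, fun a ha => if_neg ha,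
      sum_congr rfl fun a ha => if_pos ha, sum_congr rfl fun a ha => by simp only [if_pos ha]⟩
    dsimp only
    split_ifs with ha
    exacts [(single_le_sum (fun _ _ => Nat.zero_le _) ha).trans hn, Nat.zero_le _]

theorem sub_mem_genSumset_card_mul_sub (hx : x ∈ genSumset r h A) :
    ∑ a ∈ A, (r : ℤ) * a - x ∈ genSumset r (#A * r - h) A := by
  obtain ⟨lam, hle, -, rfl, rfl⟩ := hx
  refine ⟨fun a => if a ∈ A then r - lam a else 0, fun a => ?_, fun a ha => if_neg ha, ?_, ?_⟩
  · dsimp only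
    split_ifs <;> omega
  · rw [sum_congr rfl fun a ha => if_pos ha, sum_tsub_distrib _ fun a _ => hle a]
    simp [mul_comm]
  · rw [← sum_sub_distrib]
    refine sum_congr rfl fun a ha => ?_
    simp only [if_pos ha, Nat.cast_sub (hle a)]
    ring

theorem mem_genSumset_iff_sub_mem (hh : h ≤ #A * r) :
    x ∈ genSumset r h A ↔ ∑ a ∈ A, (r : ℤ) * a - x ∈ genSumset r (#A * r - h) A := by
  refine ⟨sub_mem_genSumset_card_mul_sub, fun hx => ?_⟩
  simpa [Nat.sub_sub_self hh] using sub_mem_genSumset_card_mul_sub hx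

theorem ncard_HSumset {H : Finset ℕ} (hH : ∀ h ∈ H, #A * r ≤ h + r ∧ h ≤ #A * r) :
    (HSumset r H A).ncard = #((H.image (#A * r - ·)).biUnion (· • A)) := by
  have hpre : HSumset r H A =
      (∑ a ∈ A, (r : ℤ) * a - ·) ⁻¹' ↑((H.image (#A * r - ·)).biUnion (· • A)) := by
    ext x
    simp only [HSumset, Set.mem_iUnion, exists_prop, Set.mem_preimage, coe_biUnion, coe_image,
      Set.mem_image, mem_coe, Set.iUnion_exists, Set.biUnion_and', Set.iUnion_iUnion_eq_right]
    refine exists_congr fun h => and_congr_right fun hh => ?_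
    have := hH h hh
    rw [mem_genSumset_iff_sub_mem this.2, genSumset_eq_nsmul (by omega)]
    exact mem_coe
  rw [hpre, Set.ncard_preimage_of_injective_subset_range (sub_right_injective)
    (fun y _ => ⟨_, sub_sub_cancel _ y⟩), Set.ncard_coe_finset]

end GenSumset

theorem card_formula_eq_of_le_of_lt {k r h : ℕ} (hlo : (k - 1) * r ≤ h) (hhi : h < k * r) :
    ((h / r : ℕ) : ℤ) * r * ((k : ℤ) - (h / r : ℕ)) + ((h : ℤ) - (h / r : ℕ) * r) *
      ((k : ℤ) - 2 * (h / r : ℕ) - 1) = ((k - 1) * (k * r - h) : ℕ) := by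
  have hk : 1 ≤ k := Nat.pos_of_ne_zero (by rintro rfl; simp at hhi)
  have hdiv : h / r = k - 1 := Nat.div_eq_of_lt_le hlo (by rwa [Nat.sub_add_cancel hk])
  rw [hdiv]
  push_cast [hk, hhi.le]
  ring

section BiUnionNsmul

variable {A : Finset ℤ} {J : Finset ℕ} {a₀ δ : ℤ} {jₜ : ℕ}

theorem biUnion_nsmul_eq_union_of_card_le (hA : ∀ a ∈ A, 0 < a) (ha₀ : IsLeast ↑A a₀)
    (hjₜ : IsGreatest ↑J jₜ) (hcard : #(J.biUnion (· • A)) ≤ (#A - 1) * jₜ + #J) :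
    J.biUnion (· • A) = jₜ • A ∪ (J.erase jₜ).image (· • a₀) ∧
      #(jₜ • A) ≤ (#A - 1) * jₜ + 1 := by
  have ha₀pos : 0 < a₀ := hA _ ha₀.1
  have hmono : StrictMono fun j : ℕ => j • a₀ := fun i j hij => nsmul_lt_nsmul_left ha₀pos hij
  have hsub : jₜ • A ∪ (J.erase jₜ).image (· • a₀) ⊆ J.biUnion (· • A) :=
    union_subset (subset_biUnion_of_mem (· • A) hjₜ.1) <| image_subset_iff.2 fun j hj =>
      mem_biUnion.2 ⟨j, mem_of_mem_erase hj, nsmul_mem_nsmul ha₀.1⟩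
  have hdisj : Disjoint (jₜ • A) ((J.erase jₜ).image (· • a₀)) := by
    refine disjoint_left.2 fun x hx hxM => ?_
    obtain ⟨j, hj, rfl⟩ := mem_image.1 hxM
    have hlt : j < jₜ := lt_of_le_of_ne (hjₜ.2 (mem_of_mem_erase hj)) (ne_of_mem_erase hj)
    exact (hmono hlt).not_ge (nsmul_le_of_mem_nsmul (fun a ha => ha₀.2 ha) hx)
  have hlow : #((0 : ℕ) • A) + jₜ * (#A - 1) ≤ #((0 + jₜ) • A) :=
    card_nsmul_add_mul_le ⟨a₀, ha₀.1⟩ 0 jₜ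
  have hunion := card_union_of_disjoint hdisj
  rw [card_image_of_injective _ hmono.injective, card_erase_of_mem hjₜ.1] at hunion
  have := card_le_card hsub
  have := card_pos.2 ⟨jₜ, hjₜ.1⟩
  simp only [zero_nsmul, card_zero, zero_add] at hlow
  rw [mul_comm] at hlow
  exact ⟨(eq_of_subset_of_card_le hsub (by omega)).symm, by omega⟩

theorem exists_nsmul_eq_of_biUnion_nsmul_subset (hA : ∀ a ∈ A, 0 < a) (ha₀ : IsLeast ↑A a₀)
    (hδA : a₀ + δ ∈ A) (hAδ : ∀ a ∈ A, ∃ i : ℕ, a = a₀ + i • δ) (hδ : 0 < δ)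
    (hJ0 : ∀ j ∈ J, 0 < j) (hJ : 1 < #J) (hjₜ : IsGreatest ↑J jₜ)
    (hsub : J.biUnion (· • A) ⊆ jₜ • A ∪ (J.erase jₜ).image (· • a₀)) :
    ∃ d > 0, δ = d • a₀ ∧ ∀ j ∈ J, j ≠ jₜ → j + d ∈ J := by
  have ha₀pos : 0 < a₀ := hA _ ha₀.1
  -- Every element of `jₜ • A` other than `jₜ • a₀` exceeds the element `j • a₀ + δ` of `j • A`.
  have key : ∀ j ∈ J, j ≠ jₜ → ∃ l ∈ J, j • a₀ + δ = l • a₀ := by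
    intro j hj hne
    have hlt : (j : ℤ) < jₜ := by exact_mod_cast lt_of_le_of_ne (hjₜ.2 hj) hne
    have hmem : j • a₀ + δ ∈ j • A := by
      obtain ⟨i, rfl⟩ := Nat.exists_eq_add_of_lt (hJ0 j hj)
      rw [zero_add, succ_nsmul a₀, succ_nsmul A, add_assoc]
      exact add_mem_add (nsmul_mem_nsmul ha₀.1) hδA
    rcases mem_union.1 (hsub (mem_biUnion.2 ⟨j, hj, hmem⟩)) with h | h
    · obtain ⟨_ | u, hu⟩ := exists_nsmul_add_nsmul_of_mem_nsmul hAδ h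
      · exact ⟨jₜ, hjₜ.1, by simpa using hu⟩
      · simp only [nsmul_eq_mul] at hu
        push_cast at hu
        nlinarith
    · obtain ⟨l, hl, hl'⟩ := mem_image.1 h
      exact ⟨l, mem_of_mem_erase hl, hl'.symm⟩
  obtain ⟨j, hj⟩ : (J.erase jₜ).Nonempty := by
    rw [← card_pos, card_erase_of_mem hjₜ.1]
    omega
  obtain ⟨l, hl, hjl⟩ := key j (mem_of_mem_erase hj) (ne_of_mem_erase hj)
  simp only [nsmul_eq_mul] at hjl ⊢
  have hjl' : j < l := by
    have : (j : ℤ) * a₀ < l * a₀ := by linarith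
    exact_mod_cast lt_of_mul_lt_mul_right this ha₀pos.le
  refine ⟨l - j, by omega, by push_cast [hjl'.le]; linarith, fun j' hj' hne => ?_⟩
  obtain ⟨l', hl', hjl''⟩ := key j' hj' hne
  simp only [nsmul_eq_mul] at hjl''
  have : ((j' + (l - j) : ℕ) : ℤ) = l' := by
    apply mul_right_cancel₀ ha₀pos.ne'
    push_cast [hjl'.le]
    linarith
  exact (Nat.cast_inj.1 this) ▸ hl'

theorem exists_isAP_of_card_biUnion_nsmul_le (hA : ∀ a ∈ A, 0 < a) (hA₁ : 1 < #A)
    (ha₀ : IsLeast ↑A a₀) (hJ0 : ∀ j ∈ J, 0 < j) (hJ : 1 < #J) (hjₜ : IsGreatest ↑J jₜ)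
    (hcard : #(J.biUnion (· • A)) ≤ (#A - 1) * jₜ + #J) :
    ∃ d > 0, IsAPNat J d ∧ IsAPInt A (d * a₀) := by
  obtain ⟨hunion, hjₜA⟩ := biUnion_nsmul_eq_union_of_card_le hA ha₀ hjₜ hcard
  have hjₜ2 : 2 ≤ jₜ := by
    obtain ⟨j, hj⟩ : (J.erase jₜ).Nonempty := by
      rw [← card_pos, card_erase_of_mem hjₜ.1]
      omega
    have := hJ0 j (mem_of_mem_erase hj)
    have := lt_of_le_of_ne (hjₜ.2 (mem_of_mem_erase hj)) (ne_of_mem_erase hj)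
    omega
  have h2A : #(A + A) ≤ 2 * #A - 1 := by
    obtain ⟨s, rfl⟩ := Nat.exists_eq_add_of_le' hjₜ2
    have := card_nsmul_add_mul_le ⟨a₀, ha₀.1⟩ 2 s
    rw [two_nsmul, add_comm 2 s] at this
    rw [mul_add, mul_comm] at hjₜA
    omega
  obtain ⟨δ, hδ, hAδ⟩ := exists_eq_image_range_of_card_add_self_le hA₁ ha₀ h2A
  have hδA : a₀ + δ ∈ A := by
    rw [hAδ]
    exact mem_image.2 ⟨1, mem_range.2 hA₁, by simp⟩
  have hAδ' : ∀ a ∈ A, ∃ i : ℕ, a = a₀ + i • δ := fun a ha => by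
    rw [hAδ] at ha
    obtain ⟨i, -, rfl⟩ := mem_image.1 ha
    exact ⟨i, rfl⟩
  obtain ⟨d, hd, rfl, hstep⟩ := exists_nsmul_eq_of_biUnion_nsmul_subset hA ha₀ hδA hAδ' hδ hJ0 hJ
    hjₜ hunion.le
  refine ⟨d, hd, ⟨J.min' (card_pos.1 (by omega)), ?_⟩, a₀, ?_⟩
  · simpa only [smul_eq_mul] using eq_image_range_of_add_mem (J.isLeast_min' _) hd hstep
  · simpa only [nsmul_eq_mul] using hAδ

end BiUnionNsmul

theorem stmt_8 (k t r hmin hmax : ℕ) (A : Finset ℤ) (H : Finset ℕ)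
    (hk : 6 ≤ k) (hAcard : A.card = k) (hApos : ∀ a ∈ A, 0 < a)
    (ht : 2 ≤ t) (hHcard : H.card = t)
    (hHne : H.Nonempty)
    (hminH : hmin = H.min' hHne) (hmaxH : hmax = H.max' hHne)
    (hlow : (k - 1) * r - 1 < hmin) (hup : hmax < k * r)
    (heq : ((HSumset r H A).ncard : ℤ) =
      ((hmin / r : ℕ) : ℤ) * r * ((k : ℤ) - ((hmin / r : ℕ) : ℤ))
        + ((hmin : ℤ) - ((hmin / r : ℕ) : ℤ) * r) * ((k : ℤ) - 2 * ((hmin / r : ℕ) : ℤ) - 1)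
        + t) :
    ∃ d : ℕ, 1 ≤ d ∧ d ≤ r - 1 ∧ IsAPNat H d ∧
      IsAPInt A ((d : ℤ) * A.min' (Finset.card_pos.mp (by rw [hAcard]; omega))) := by
  have hmin' : IsLeast ↑H hmin := hminH ▸ H.isLeast_min' hHne
  have hH : ∀ h ∈ H, (k - 1) * r ≤ h ∧ h < k * r := fun h hh =>
    ⟨by have := hmin'.2 hh; omega, (hmaxH ▸ H.le_max' h hh).trans_lt hup⟩
  have hHkr : ∀ h ∈ H, h ≤ k * r := fun h hh => (hH h hh).2.le
  have hkr : k * r = (k - 1) * r + r := by rw [← add_one_mul, Nat.sub_add_cancel (by omega)]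
  set J := H.image (k * r - ·)
  have hJ : ∀ j ∈ J, 0 < j ∧ j ≤ r := by
    simp only [J, mem_image]
    rintro _ ⟨h, hh, rfl⟩
    have := hH h hh
    omega
  have hjₜ : IsGreatest ↑J (k * r - hmin) := by
    rw [coe_image]
    have hanti : Antitone (k * r - ·) := fun _ _ hxy => Nat.sub_le_sub_left hxy _
    exact hanti.map_isLeast hmin'
  have hcard : #(J.biUnion (· • A)) ≤ (#A - 1) * (k * r - hmin) + #J := by
    rw [ncard_HSumset fun h hh => by rw [hAcard]; have := hH h hh; omega, hAcard,
      card_formula_eq_of_le_of_lt (by omega) (hH _ hmin'.1).2] at heq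
    rw [hAcard, card_image_tsub hHkr, hHcard]
    exact_mod_cast heq.le
  obtain ⟨d, hd, hJd, hAd⟩ := exists_isAP_of_card_biUnion_nsmul_le hApos (by omega)
    (A.isLeast_min' _) (fun j hj => (hJ j hj).1) (by rw [card_image_tsub hHkr]; omega) hjₜ hcard
  refine ⟨d, hd, ?_, image_tsub_image_tsub hHkr ▸ hJd.image_tsub fun j hj => ?_, hAd⟩
  · have := hJd.le_sub (by rw [card_image_tsub hHkr]; omega) hJ
    omega
  · obtain ⟨h, hh, rfl⟩ := mem_image.1 hj
    exact Nat.sub_le _ _
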